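/- arXiv:1301.5515 — 2 statements merged into one kernel-verified Lean document; each statement's English description precedes it below -/
import Mathlib

section
/- Let 0 < δ < 2 and let a, b ∈ ℝ³ with dist a b = δ. Then the Lebesgue volume of closedBall a 1 ∩ closedBall b 1 equals (4π/3)·(1 − (3/4)δ + (1/16)δ³). -/
/-!
An isometry of ℝ³ carries any two points at distance δ to `0` and `δ e₀`, so the lens may be
taken with these centres. Its slice at height `t` along `e₀` is a disc of squared radius
`min (1 - t²) (1 - (t - δ)²)`, and Cavalieri's principle turns the volume into the integral of
`π` times this over `[δ - 1, 1]`; splitting at `δ / 2` gives two spherical caps of height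
`1 - δ / 2`.
-/

open MeasureTheory Metric Real

theorem volume_closedBall_inter_closedBall_congr {E : Type*} [NormedAddCommGroup E]
    [InnerProductSpace ℝ E] [FiniteDimensional ℝ E] [MeasurableSpace E] [BorelSpace E]
    {a b a' b' : E} (h : dist a b = dist a' b') (r s : ℝ) :
    volume (closedBall a r ∩ closedBall b s) = volume (closedBall a' r ∩ closedBall b' s) := by
  have hnorm : ‖b - a‖ = ‖b' - a'‖ := by
    rw [← dist_eq_norm, ← dist_eq_norm, dist_comm, h, dist_comm]
  set ρ := Submodule.reflection (ℝ ∙ ((b - a) - (b' - a')))ᗮ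
  let φ : E ≃ᵢ E :=
    (IsometryEquiv.subRight a).trans (ρ.toIsometryEquiv.trans (IsometryEquiv.addRight a'))
  have hφ : MeasurePreserving φ :=
    ((measurePreserving_add_right volume a').comp ρ.measurePreserving).comp
      (measurePreserving_sub_right volume a)
  have ha : φ a = a' := by simp [φ]
  have hb : φ b = b' := by simp [φ, ρ, Submodule.reflection_sub hnorm]
  calc volume (closedBall a r ∩ closedBall b s)
      = volume (φ ⁻¹' (closedBall a' r ∩ closedBall b' s)) := by
        rw [Set.preimage_inter, φ.preimage_closedBall, φ.preimage_closedBall, ← ha, ← hb,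
          φ.symm_apply_apply, φ.symm_apply_apply]
    _ = _ := hφ.measure_preimage
        (measurableSet_closedBall.inter measurableSet_closedBall).nullMeasurableSet

theorem volume_setOf_sq_add_sq_le_fin_two (R : ℝ) :
    volume {y : Fin 2 → ℝ | y 0 ^ 2 + y 1 ^ 2 ≤ R} = ENNReal.ofReal (π * R) := by
  rcases lt_or_ge R 0 with hR | hR
  · rw [ENNReal.ofReal_of_nonpos (mul_nonpos_of_nonneg_of_nonpos pi_pos.le hR.le),
      measure_eq_zero_iff_ae_notMem]
    exact .of_forall fun y hy => (hR.trans_le (by positivity)).not_ge hy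
  · have hdisc : {y : Fin 2 → ℝ | y 0 ^ 2 + y 1 ^ 2 ≤ R} =
        WithLp.toLp 2 ⁻¹' closedBall (0 : EuclideanSpace ℝ (Fin 2)) √R := by
      ext y
      simp [EuclideanSpace.norm_eq, Fin.sum_univ_two, Real.sqrt_le_sqrt_iff hR]
    rw [hdisc, (PiLp.volume_preserving_toLp (Fin 2)).measure_preimage
      measurableSet_closedBall.nullMeasurableSet, EuclideanSpace.volume_closedBall_fin_two,
      ← ENNReal.ofReal_pow (sqrt_nonneg R), sq_sqrt hR, ← ENNReal.ofReal_mul hR, mul_comm]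

theorem volume_setOf_sq_add_sq_le_fin_three {g : ℝ → ℝ} (hg : Measurable g) :
    volume {x : EuclideanSpace ℝ (Fin 3) | x 1 ^ 2 + x 2 ^ 2 ≤ g (x 0)} =
      ∫⁻ t, ENNReal.ofReal (π * g t) := by
  set S := {p : ℝ × (Fin 2 → ℝ) | p.2 0 ^ 2 + p.2 1 ^ 2 ≤ g p.1}
  have hS : MeasurableSet S := measurableSet_le (by fun_prop) (hg.comp measurable_fst)
  have hsplit := (volume_preserving_piFinSuccAbove (fun _ : Fin 3 => ℝ) 0).comp
    (PiLp.volume_preserving_ofLp (Fin 3))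
  have hpre : (⇑(MeasurableEquiv.piFinSuccAbove (fun _ : Fin 3 => ℝ) 0) ∘ WithLp.ofLp) ⁻¹' S =
      {x : EuclideanSpace ℝ (Fin 3) | x 1 ^ 2 + x 2 ^ 2 ≤ g (x 0)} := rfl
  rw [← hpre, hsplit.measure_preimage hS.nullMeasurableSet, Measure.volume_eq_prod,
    Measure.prod_apply hS]
  congr 1 with t
  exact volume_setOf_sq_add_sq_le_fin_two (g t)

theorem closedBall_zero_inter_closedBall_single (δ : ℝ) :
    closedBall (0 : EuclideanSpace ℝ (Fin 3)) 1 ∩ closedBall (EuclideanSpace.single 0 δ) 1 =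
      {x | x 1 ^ 2 + x 2 ^ 2 ≤ min (1 - x 0 ^ 2) (1 - (x 0 - δ) ^ 2)} := by
  ext x
  simp only [Set.mem_inter_iff, mem_closedBall, EuclideanSpace.dist_eq, Fin.sum_univ_three,
    Real.dist_eq, sq_abs, Real.sqrt_le_one, Set.mem_ofPred_eq, le_min_iff, PiLp.zero_apply,
    sub_zero, PiLp.single_eq_same, PiLp.single_eq_of_ne (p := 2) (by decide : (1 : Fin 3) ≠ 0),
    PiLp.single_eq_of_ne (p := 2) (by decide : (2 : Fin 3) ≠ 0)]
  constructor <;> rintro ⟨h₁, h₂⟩ <;> constructor <;> linarith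

theorem integral_pi_mul_one_sub_sq (a b c : ℝ) :
    ∫ t in a..b, π * (1 - (t - c) ^ 2) =
      π * ((b - (b - c) ^ 3 / 3) - (a - (a - c) ^ 3 / 3)) := by
  simp [intervalIntegral.integral_comp_sub_right fun t => 1 - t ^ 2]
  ring

theorem integral_pi_mul_min_one_sub_sq {δ : ℝ} (hδ₀ : 0 ≤ δ) (hδ₂ : δ ≤ 2) :
    ∫ t in (δ - 1)..1, π * min (1 - t ^ 2) (1 - (t - δ) ^ 2) =
      (4 * π / 3) * (1 - (3 / 4) * δ + (1 / 16) * δ ^ 3) := by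
  have hcont : Continuous fun t : ℝ => π * min (1 - t ^ 2) (1 - (t - δ) ^ 2) := by fun_prop
  rw [← intervalIntegral.integral_add_adjacent_intervals (b := δ / 2)
    (hcont.intervalIntegrable _ _) (hcont.intervalIntegrable _ _)]
  have hleft : ∫ t in (δ - 1)..(δ / 2), π * min (1 - t ^ 2) (1 - (t - δ) ^ 2) =
      ∫ t in (δ - 1)..(δ / 2), π * (1 - (t - δ) ^ 2) := by
    refine intervalIntegral.integral_congr fun t ht => ?_
    rw [Set.uIcc_of_le (by linarith), Set.mem_Icc] at ht
    rw [min_eq_right (by nlinarith)]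
  have hright : ∫ t in (δ / 2)..1, π * min (1 - t ^ 2) (1 - (t - δ) ^ 2) =
      ∫ t in (δ / 2)..1, π * (1 - (t - 0) ^ 2) := by
    refine intervalIntegral.integral_congr fun t ht => ?_
    rw [Set.uIcc_of_le (by linarith), Set.mem_Icc] at ht
    rw [min_eq_left (by nlinarith), sub_zero]
  rw [hleft, hright, integral_pi_mul_one_sub_sq, integral_pi_mul_one_sub_sq]
  ring

theorem lintegral_ofReal_pi_mul_min_one_sub_sq {δ : ℝ} (hδ₀ : 0 ≤ δ) (hδ₂ : δ ≤ 2) :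
    ∫⁻ t, ENNReal.ofReal (π * min (1 - t ^ 2) (1 - (t - δ) ^ 2)) =
      ENNReal.ofReal ((4 * π / 3) * (1 - (3 / 4) * δ + (1 / 16) * δ ^ 3)) := by
  set f : ℝ → ℝ := fun t => π * min (1 - t ^ 2) (1 - (t - δ) ^ 2)
  have hsupp : (fun t => ENNReal.ofReal (f t)).support ⊆ Set.Icc (δ - 1) 1 := by
    intro t ht
    rw [Function.mem_support, ne_eq, ENNReal.ofReal_eq_zero, not_le] at ht
    obtain ⟨h₁, h₂⟩ := lt_min_iff.mp (pos_of_mul_pos_right ht pi_pos.le)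
    constructor <;> nlinarith
  have hnonneg : ∀ t ∈ Set.Icc (δ - 1) 1, 0 ≤ f t := by
    rintro t ⟨h₁, h₂⟩
    refine mul_nonneg pi_pos.le (le_min ?_ ?_) <;> nlinarith
  rw [← setLIntegral_eq_of_support_subset hsupp, ← ofReal_integral_eq_lintegral_ofReal
    ((by fun_prop : Continuous f).integrableOn_Icc)
    (ae_restrict_of_forall_mem measurableSet_Icc hnonneg),
    integral_Icc_eq_integral_Ioc, ← intervalIntegral.integral_of_le (by linarith),
    integral_pi_mul_min_one_sub_sq hδ₀ hδ₂]

theorem lens_volume_delta_general (δ : ℝ) (hδ₂ : δ < 2)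
    (a b : EuclideanSpace ℝ (Fin 3)) (h : dist a b = δ) :
    volume (closedBall a 1 ∩ closedBall b 1) =
      ENNReal.ofReal ((4 * π / 3) * (1 - (3 / 4) * δ + (1 / 16) * δ ^ 3)) := by
  have hδ₀ : 0 ≤ δ := h ▸ dist_nonneg
  have hdist : dist a b = dist 0 (EuclideanSpace.single (0 : Fin 3) δ) := by
    rw [h, dist_zero_left, PiLp.norm_single, norm_of_nonneg hδ₀]
  rw [volume_closedBall_inter_closedBall_congr hdist, closedBall_zero_inter_closedBall_single,
    volume_setOf_sq_add_sq_le_fin_three (g := fun t => min (1 - t ^ 2) (1 - (t - δ) ^ 2))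
      (by fun_prop), lintegral_ofReal_pi_mul_min_one_sub_sq hδ₀ hδ₂.le]

theorem lens_volume_delta (δ : ℝ) (hδ₀ : 0 < δ) (hδ₂ : δ < 2)
    (a b : EuclideanSpace ℝ (Fin 3)) (h : dist a b = δ) :
    volume (closedBall a 1 ∩ closedBall b 1) =
      ENNReal.ofReal ((4 * π / 3) * (1 - (3 / 4) * δ + (1 / 16) * δ ^ 3)) :=
  lens_volume_delta_general δ hδ₂ a b h
end

section
/- Let ℓ ≥ 0 and let S ⊆ ℝ³ be a closed line segment of length ℓ (the segment joining two points p, q with dist p q = ℓ). Then the Lebesgue volume of the set {x ∈ ℝ³ : infDist x S ≤ 1} (the right circular cylinder of radius 1 and length ℓ with hemispherical ends) equals (ℓ + 4/3)·π. -/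
/-!
An affine isometry carries the segment to `[0, ℓ e₀]`. There the capsule is the solid of
revolution about the first axis whose slice at `t` is the disc of squared radius
`1 - (t - proj_{[0, ℓ]} t)²`, so by Cavalieri its volume is `∫ π (1 - (t - proj t)²) dt`.
On `(0, ℓ]` the integrand is `π`; after a translation, the pieces over `t ≤ 0` and `t > ℓ` are
the two halves of the same integral for the unit ball, which is `4π/3`.
-/

open MeasureTheory Metric Real Set

theorem abs_sub_projIcc_le {α : Type*} [AddCommGroup α] [LinearOrder α] [IsOrderedAddMonoid α]
    {a b : α} (h : a ≤ b) (t : α) {u : α} (hu : u ∈ Icc a b) :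
    |t - projIcc a b h t| ≤ |t - u| := by
  rcases le_total t a with hta | hat
  · rw [projIcc_of_le_left h hta, abs_of_nonpos (sub_nonpos.2 hta),
      abs_of_nonpos (sub_nonpos.2 (hta.trans hu.1))]
    exact neg_le_neg (sub_le_sub_left hu.1 t)
  rcases le_total t b with htb | hbt
  · simp [projIcc_of_mem h ⟨hat, htb⟩]
  · rw [projIcc_of_right_le h hbt, abs_of_nonneg (sub_nonneg.2 hbt),
      abs_of_nonneg (sub_nonneg.2 (hu.2.trans hbt))]
    exact sub_le_sub_left hu.2 t

section Isometry

variable {E : Type*} [NormedAddCommGroup E] [InnerProductSpace ℝ E]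

theorem AffineIsometryEquiv.exists_apply_eq_apply_eq_of_dist_eq {p q p' q' : E}
    (h : dist p q = dist p' q') : ∃ f : E ≃ᵃⁱ[ℝ] E, f p = p' ∧ f q = q' := by
  have hnorm : ‖q - p‖ = ‖q' - p'‖ := by
    rw [← dist_eq_norm, ← dist_eq_norm, dist_comm, h, dist_comm]
  let R := (Submodule.reflection (ℝ ∙ (q - p - (q' - p')))ᗮ).toAffineIsometryEquiv
  refine ⟨(vaddConst ℝ p).symm.trans (R.trans (vaddConst ℝ p')), ?_, ?_⟩
  · simp [R]
  · simp [R, Submodule.reflection_sub hnorm]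

variable [FiniteDimensional ℝ E] [MeasurableSpace E] [BorelSpace E]

theorem AffineIsometryEquiv.measurePreserving (f : E ≃ᵃⁱ[ℝ] E) : MeasurePreserving f := by
  have hf : (f : E → E) = (· + f 0) ∘ f.linearIsometryEquiv := by
    ext x
    simpa using f.map_vadd 0 x
  rw [hf]
  exact (measurePreserving_add_right volume (f 0)).comp f.linearIsometryEquiv.measurePreserving

theorem volume_setOf_infDist_segment_le_congr {p q p' q' : E} (h : dist p q = dist p' q')
    (r : ℝ) :
    volume {x | infDist x (segment ℝ p q) ≤ r} = volume {x | infDist x (segment ℝ p' q') ≤ r} := by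
  obtain ⟨f, hp, hq⟩ := AffineIsometryEquiv.exists_apply_eq_apply_eq_of_dist_eq h
  have hseg : f '' segment ℝ p q = segment ℝ p' q' := by
    rw [← hp, ← hq]
    exact image_segment ℝ f.toAffineEquiv.toAffineMap p q
  have hpre : {x | infDist x (segment ℝ p q) ≤ r} =
      f ⁻¹' {y | infDist y (segment ℝ p' q') ≤ r} := by
    ext x
    simp only [mem_ofPred_eq, mem_preimage, ← hseg, infDist_image f.isometry]
  rw [hpre, f.measurePreserving.measure_preimage
    (isClosed_le (continuous_infDist_pt _) continuous_const).nullMeasurableSet]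

end Isometry

theorem volume_setOf_sq_add_sq_le (r : ℝ) :
    volume {y : Fin 2 → ℝ | y 0 ^ 2 + y 1 ^ 2 ≤ r} = ENNReal.ofReal (π * r) := by
  rcases lt_or_ge r 0 with hr | hr
  · have hempty : {y : Fin 2 → ℝ | y 0 ^ 2 + y 1 ^ 2 ≤ r} = ∅ := by
      ext y
      simp only [mem_ofPred_eq, mem_empty_iff_false, iff_false, not_le]
      linarith [sq_nonneg (y 0), sq_nonneg (y 1)]
    rw [hempty, measure_empty, ENNReal.ofReal_of_nonpos (mul_nonpos_of_nonneg_of_nonpos pi_pos.le hr.le)]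
  · have hball : (MeasurableEquiv.toLp 2 (Fin 2 → ℝ)).symm ⁻¹' {y | y 0 ^ 2 + y 1 ^ 2 ≤ r} =
        closedBall (0 : EuclideanSpace ℝ (Fin 2)) √r := by
      ext x
      rw [mem_preimage, mem_ofPred_eq, mem_closedBall_zero_iff, EuclideanSpace.norm_eq,
        Real.sqrt_le_sqrt_iff hr, Fin.sum_univ_two]
      simp [sq_abs]
    rw [← (EuclideanSpace.volume_preserving_symm_measurableEquiv_toLp (Fin 2)).measure_preimage
      (measurableSet_le (by fun_prop) measurable_const).nullMeasurableSet, hball,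
      EuclideanSpace.volume_closedBall_fin_two, ← ENNReal.ofReal_pow (sqrt_nonneg r), sq_sqrt hr,
      ← ENNReal.ofReal_mul hr, mul_comm]

theorem volume_solidOfRevolution {f : ℝ → ℝ} (hf : Measurable f) :
    volume {x : EuclideanSpace ℝ (Fin 3) | x 1 ^ 2 + x 2 ^ 2 ≤ f (x 0)} =
      ∫⁻ t, ENNReal.ofReal (π * f t) := by
  let A : Set (Fin 3 → ℝ) := {x | x 1 ^ 2 + x 2 ^ 2 ≤ f (x 0)}
  let B : Set (ℝ × (Fin 2 → ℝ)) := {z | z.2 0 ^ 2 + z.2 1 ^ 2 ≤ f z.1}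
  have hA : MeasurableSet A := measurableSet_le (by fun_prop) (by fun_prop)
  have hB : MeasurableSet B := measurableSet_le (by fun_prop) (by fun_prop)
  calc volume {x : EuclideanSpace ℝ (Fin 3) | x 1 ^ 2 + x 2 ^ 2 ≤ f (x 0)}
      = volume A :=
        (EuclideanSpace.volume_preserving_symm_measurableEquiv_toLp (Fin 3)).measure_preimage
          hA.nullMeasurableSet
    _ = volume B :=
        (volume_preserving_piFinSuccAbove (fun _ : Fin 3 => ℝ) 0).measure_preimage
          hB.nullMeasurableSet
    _ = ∫⁻ t, volume (Prod.mk t ⁻¹' B) := by rw [Measure.volume_eq_prod, Measure.prod_apply hB]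
    _ = ∫⁻ t, ENNReal.ofReal (π * f t) := by simp_rw [← volume_setOf_sq_add_sq_le]; rfl

theorem lintegral_ofReal_pi_mul_one_sub_sq :
    ∫⁻ t, ENNReal.ofReal (π * (1 - t ^ 2)) = ENNReal.ofReal (4 / 3 * π) := by
  have hball : closedBall (0 : EuclideanSpace ℝ (Fin 3)) 1 =
      {x | x 1 ^ 2 + x 2 ^ 2 ≤ 1 - x 0 ^ 2} := by
    ext x
    rw [mem_closedBall_zero_iff, ← sq_le_one_iff₀ (norm_nonneg x), EuclideanSpace.norm_sq_eq,
      Fin.sum_univ_three, mem_ofPred_eq]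
    simp only [Real.norm_eq_abs, sq_abs]
    constructor <;> intro h <;> linarith
  rw [← volume_solidOfRevolution (by fun_prop), ← hball,
    EuclideanSpace.volume_closedBall_fin_three]
  simp only [ENNReal.ofReal_one, one_pow, one_mul]
  ring_nf

theorem segment_zero_single_eq_image {ℓ : ℝ} (hℓ : 0 ≤ ℓ) :
    segment ℝ (0 : EuclideanSpace ℝ (Fin 3)) (EuclideanSpace.single 0 ℓ) =
      EuclideanSpace.single 0 '' Icc 0 ℓ := by
  have hline : (EuclideanSpace.single 0 : ℝ → EuclideanSpace ℝ (Fin 3)) =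
      AffineMap.lineMap 0 (EuclideanSpace.single 0 1) := by
    ext t j
    simp [AffineMap.lineMap_apply, PiLp.single_apply]
  rw [hline, ← segment_eq_Icc hℓ, image_segment]
  simp

theorem dist_single_zero_eq_sqrt (x : EuclideanSpace ℝ (Fin 3)) (c : ℝ) :
    dist x (EuclideanSpace.single 0 c) = √((x 0 - c) ^ 2 + x 1 ^ 2 + x 2 ^ 2) := by
  rw [EuclideanSpace.dist_eq, Fin.sum_univ_three]
  simp [Real.dist_eq, sq_abs]

theorem infDist_segment_zero_single {ℓ : ℝ} (hℓ : 0 ≤ ℓ) (x : EuclideanSpace ℝ (Fin 3)) :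
    infDist x (segment ℝ 0 (EuclideanSpace.single 0 ℓ)) =
      √((x 0 - projIcc 0 ℓ hℓ (x 0)) ^ 2 + x 1 ^ 2 + x 2 ^ 2) := by
  rw [segment_zero_single_eq_image hℓ, ← dist_single_zero_eq_sqrt]
  refine le_antisymm (infDist_le_dist_of_mem (mem_image_of_mem _ (projIcc 0 ℓ hℓ (x 0)).2)) ?_
  rw [le_infDist ((nonempty_Icc.2 hℓ).image _)]
  rintro _ ⟨u, hu, rfl⟩
  rw [dist_single_zero_eq_sqrt, dist_single_zero_eq_sqrt]
  gcongr √(?_ + _ + _)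
  exact sq_le_sq.2 (abs_sub_projIcc_le hℓ _ hu)

theorem lintegral_ofReal_pi_mul_one_sub_sq_sub_projIcc {ℓ : ℝ} (hℓ : 0 ≤ ℓ) :
    ∫⁻ t, ENNReal.ofReal (π * (1 - (t - projIcc 0 ℓ hℓ t) ^ 2)) =
      ENNReal.ofReal ((ℓ + 4 / 3) * π) := by
  set φ : ℝ → ENNReal := fun t ↦ ENNReal.ofReal (π * (1 - t ^ 2))
  have hsplit (g : ℝ → ENNReal) : ∫⁻ t, g t = (∫⁻ t in Iic 0, g t) + ∫⁻ t in Ioi 0, g t := by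
    rw [← compl_Iic, lintegral_add_compl _ measurableSet_Iic]
  have hleft : ∫⁻ t in Iic 0, ENNReal.ofReal (π * (1 - (t - projIcc 0 ℓ hℓ t) ^ 2)) =
      ∫⁻ t in Iic 0, φ t :=
    setLIntegral_congr_fun measurableSet_Iic fun t ht ↦ by simp [φ, projIcc_of_le_left hℓ ht]
  have hmid : ∫⁻ t in Ioc 0 ℓ, ENNReal.ofReal (π * (1 - (t - projIcc 0 ℓ hℓ t) ^ 2)) =
      ENNReal.ofReal (ℓ * π) := by
    rw [setLIntegral_congr_fun measurableSet_Ioc fun t ht ↦ by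
      rw [projIcc_of_mem hℓ (Ioc_subset_Icc_self ht), sub_self]]
    simp [ENNReal.ofReal_mul hℓ, mul_comm]
  have hright : ∫⁻ t in Ioi ℓ, ENNReal.ofReal (π * (1 - (t - projIcc 0 ℓ hℓ t) ^ 2)) =
      ∫⁻ t in Ioi 0, φ t := by
    rw [← (measurePreserving_sub_right volume ℓ).setLIntegral_comp_preimage (f := φ)
      measurableSet_Ioi (by fun_prop), preimage_sub_const_Ioi, zero_add]
    exact setLIntegral_congr_fun measurableSet_Ioi fun t ht ↦ by
      simp [φ, projIcc_of_right_le hℓ ht.le]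
  calc ∫⁻ t, ENNReal.ofReal (π * (1 - (t - projIcc 0 ℓ hℓ t) ^ 2))
      = (∫⁻ t in Iic 0, ENNReal.ofReal (π * (1 - (t - projIcc 0 ℓ hℓ t) ^ 2))) +
          ((∫⁻ t in Ioc 0 ℓ, ENNReal.ofReal (π * (1 - (t - projIcc 0 ℓ hℓ t) ^ 2))) +
            ∫⁻ t in Ioi ℓ, ENNReal.ofReal (π * (1 - (t - projIcc 0 ℓ hℓ t) ^ 2))) := by
        rw [hsplit, ← lintegral_union measurableSet_Ioi (Ioc_disjoint_Ioi le_rfl),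
          Ioc_union_Ioi_eq_Ioi hℓ]
    _ = ENNReal.ofReal (ℓ * π) + ((∫⁻ t in Iic 0, φ t) + ∫⁻ t in Ioi 0, φ t) := by
        rw [hleft, hmid, hright]
        ring
    _ = ENNReal.ofReal ((ℓ + 4 / 3) * π) := by
        rw [← hsplit, lintegral_ofReal_pi_mul_one_sub_sq,
          ← ENNReal.ofReal_add (by positivity) (by positivity)]
        ring_nf

theorem capsule_volume_general (ℓ : ℝ) (p q : EuclideanSpace ℝ (Fin 3))
    (h : dist p q = ℓ) :
    volume {x : EuclideanSpace ℝ (Fin 3) | infDist x (segment ℝ p q) ≤ 1} =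
      ENNReal.ofReal ((ℓ + 4 / 3) * π) := by
  have hℓ : 0 ≤ ℓ := h ▸ dist_nonneg
  have hdist : dist p q = dist 0 (EuclideanSpace.single (0 : Fin 3) ℓ) := by
    simp [h, abs_of_nonneg hℓ]
  have hcapsule : {x : EuclideanSpace ℝ (Fin 3) |
      infDist x (segment ℝ 0 (EuclideanSpace.single 0 ℓ)) ≤ 1} =
      {x | x 1 ^ 2 + x 2 ^ 2 ≤ 1 - (x 0 - (projIcc 0 ℓ hℓ (x 0) : ℝ)) ^ 2} := by
    ext x
    rw [mem_ofPred_eq, mem_ofPred_eq, infDist_segment_zero_single hℓ, sqrt_le_one]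
    constructor <;> intro hx <;> linarith
  rw [volume_setOf_infDist_segment_le_congr hdist, hcapsule,
    volume_solidOfRevolution (f := fun t ↦ 1 - (t - projIcc 0 ℓ hℓ t) ^ 2) (by fun_prop),
    lintegral_ofReal_pi_mul_one_sub_sq_sub_projIcc]

theorem capsule_volume (ℓ : ℝ) (hℓ : 0 ≤ ℓ) (p q : EuclideanSpace ℝ (Fin 3))
    (h : dist p q = ℓ) :
    volume {x : EuclideanSpace ℝ (Fin 3) | infDist x (segment ℝ p q) ≤ 1} =
      ENNReal.ofReal ((ℓ + 4 / 3) * π) :=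
  capsule_volume_general ℓ p q h
end
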